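/- Iterated commutator identity for the Gross–Pitaevskii equation: Let d ≥ 1, ϑ ∈ ℝ, V ∈ C²(ℝ^d, ℝ), and let v : ℝ^d → ℂ be of class C². Define F₂(v) = − i (V + ϑ |v|²) v, F₂′(v)w = − i (V w + 2ϑ |v|² w + ϑ v² w̄), G₁(v) = − ΔV v − 2 ∇V·∇v − 2ϑ (Δv̄ v² + (∇v·∇v) v̄ + 2 (∇v·∇v̄) v), and for a C² function w define G₁′(v)w = − ΔV w − 2 ∇V·∇w − 2ϑ ( 2 v w Δv̄ + v² Δw̄ + (∇v·∇v) w̄ + 2 (∇v·∇w) v̄ + 2 (∇v·∇v̄) w + 2 (∇w·∇v̄) v + 2 (∇v·∇w̄) v ). Then pointwise on ℝ^d: F₂′(v) G₁(v) − G₁′(v) F₂(v) = − 2 i ( |∇V|² − 2ϑ ( |v|² ΔV + ϑ ( |v|² (2 Re(v̄ Δv) + 3 ∇v̄·∇v) + Re(v̄² ∇v·∇v) ) ) ) v. -/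

import Mathlib

/-!
Write `F₂(v) = −i P v` with the multiplier `P = V + ϑ v v̄`. Two applications of the Leibniz rule
express `∂ⱼF₂(v)` and `∂ⱼ²F₂(v)` through the jets `V, ∂ⱼV, ∂ⱼ²V, v, ∂ⱼv, ∂ⱼ²v` and their
conjugates, since `∂ⱼ` commutes with conjugation. After this substitution both sides are linear
combinations of sums over the directions `j`, with coefficients polynomial in `V(x)`, `v(x)`,
`v̄(x)`, and the identity holds term by term in `j` as a polynomial identity.
-/

open Complex

/-- `j`-th partial derivative of a complex-valued function on `ℝ^d`. -/
noncomputable def pdC {d : ℕ} (j : Fin d) (w : (Fin d → ℝ) → ℂ) (x : Fin d → ℝ) : ℂ :=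
  fderiv ℝ w x (Pi.single j 1)

/-- Laplacian of a complex-valued function on `ℝ^d`. -/
noncomputable def lapC {d : ℕ} (w : (Fin d → ℝ) → ℂ) (x : Fin d → ℝ) : ℂ :=
  ∑ j, pdC j (fun y => pdC j w y) x

/-- Gradient dot product `∇w·∇z` of complex-valued functions on `ℝ^d`. -/
noncomputable def gdotC {d : ℕ} (w z : (Fin d → ℝ) → ℂ) (x : Fin d → ℝ) : ℂ :=
  ∑ j, pdC j w x * pdC j z x

/-- `j`-th partial derivative of a real-valued function on `ℝ^d`. -/
noncomputable def pdR {d : ℕ} (j : Fin d) (w : (Fin d → ℝ) → ℝ) (x : Fin d → ℝ) : ℝ :=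
  fderiv ℝ w x (Pi.single j 1)

/-- Laplacian of a real-valued function on `ℝ^d`. -/
noncomputable def lapR {d : ℕ} (w : (Fin d → ℝ) → ℝ) (x : Fin d → ℝ) : ℝ :=
  ∑ j, pdR j (fun y => pdR j w y) x

/-- Gradient dot product `∇w·∇z` of real-valued functions on `ℝ^d`. -/
noncomputable def gdotR {d : ℕ} (w z : (Fin d → ℝ) → ℝ) (x : Fin d → ℝ) : ℝ :=
  ∑ j, pdR j w x * pdR j z x

/-- `F₂(v) = −i (V + ϑ|v|²) v` for the Gross–Pitaevskii equation. -/
noncomputable def F2gp {d : ℕ} (V : (Fin d → ℝ) → ℝ) (ϑ : ℝ)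
    (v : (Fin d → ℝ) → ℂ) : (Fin d → ℝ) → ℂ :=
  fun y => - Complex.I * ((V y : ℂ) + (ϑ : ℂ) * (Complex.normSq (v y) : ℂ)) * v y

/-- `F₂′(v)w = −i (V w + 2ϑ|v|² w + ϑ v² w̄)`. -/
noncomputable def F2gpD {d : ℕ} (V : (Fin d → ℝ) → ℝ) (ϑ : ℝ)
    (v w : (Fin d → ℝ) → ℂ) : (Fin d → ℝ) → ℂ :=
  fun y => - Complex.I * ((V y : ℂ) * w y
    + 2 * (ϑ : ℂ) * (Complex.normSq (v y) : ℂ) * w y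
    + (ϑ : ℂ) * (v y) ^ 2 * (starRingEnd ℂ) (w y))

/-- `G₁(v) = −ΔV v − 2 ∇V·∇v − 2ϑ (Δv̄ v² + (∇v·∇v) v̄ + 2 (∇v·∇v̄) v)`. -/
noncomputable def G1gp {d : ℕ} (V : (Fin d → ℝ) → ℝ) (ϑ : ℝ)
    (v : (Fin d → ℝ) → ℂ) : (Fin d → ℝ) → ℂ :=
  fun y => - (lapR V y : ℂ) * v y - 2 * gdotC (fun z => (V z : ℂ)) v y
    - 2 * (ϑ : ℂ) * (lapC (fun z => (starRingEnd ℂ) (v z)) y * (v y) ^ 2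
        + gdotC v v y * (starRingEnd ℂ) (v y)
        + 2 * gdotC v (fun z => (starRingEnd ℂ) (v z)) y * v y)

/-- `G₁′(v)w = −ΔV w − 2 ∇V·∇w − 2ϑ (2 v w Δv̄ + v² Δw̄ + (∇v·∇v) w̄ + 2 (∇v·∇w) v̄
  + 2 (∇v·∇v̄) w + 2 (∇w·∇v̄) v + 2 (∇v·∇w̄) v)`. -/
noncomputable def G1gpD {d : ℕ} (V : (Fin d → ℝ) → ℝ) (ϑ : ℝ)
    (v w : (Fin d → ℝ) → ℂ) : (Fin d → ℝ) → ℂ :=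
  fun y => - (lapR V y : ℂ) * w y - 2 * gdotC (fun z => (V z : ℂ)) w y
    - 2 * (ϑ : ℂ) * (2 * v y * w y * lapC (fun z => (starRingEnd ℂ) (v z)) y
        + (v y) ^ 2 * lapC (fun z => (starRingEnd ℂ) (w z)) y
        + gdotC v v y * (starRingEnd ℂ) (w y)
        + 2 * gdotC v w y * (starRingEnd ℂ) (v y)
        + 2 * gdotC v (fun z => (starRingEnd ℂ) (v z)) y * w y
        + 2 * gdotC w (fun z => (starRingEnd ℂ) (v z)) y * v y
        + 2 * gdotC v (fun z => (starRingEnd ℂ) (w z)) y * v y)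

open ComplexConjugate

section PartialDerivatives

variable {d : ℕ} {j : Fin d} {f g : (Fin d → ℝ) → ℂ} {x : Fin d → ℝ}

lemma ContDiff.differentiable_fderiv_apply {𝕜 E F : Type*} [NontriviallyNormedField 𝕜]
    [NormedAddCommGroup E] [NormedSpace 𝕜 E] [NormedAddCommGroup F] [NormedSpace 𝕜 F]
    {f : E → F} (hf : ContDiff 𝕜 2 f) (u : E) : Differentiable 𝕜 fun y => fderiv 𝕜 f y u :=
  ((hf.fderiv_right (m := 1) (by norm_num)).clm_apply contDiff_const).differentiable one_ne_zero

lemma ContDiff.conj {n : WithTop ℕ∞} (hf : ContDiff ℝ n f) : ContDiff ℝ n fun y => conj (f y) :=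
  conjCLE.contDiff.comp hf

lemma ContDiff.ofReal {n : WithTop ℕ∞} {V : (Fin d → ℝ) → ℝ} (hV : ContDiff ℝ n V) :
    ContDiff ℝ n fun y => (V y : ℂ) :=
  ofRealCLM.contDiff.comp hV

lemma ContDiff.differentiable_pdC (hf : ContDiff ℝ 2 f) :
    Differentiable ℝ fun y => pdC j f y :=
  hf.differentiable_fderiv_apply _

lemma ContDiff.differentiable_pdR {V : (Fin d → ℝ) → ℝ} (hV : ContDiff ℝ 2 V) :
    Differentiable ℝ fun y => pdR j V y :=
  hV.differentiable_fderiv_apply _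

lemma pdC_add (hf : DifferentiableAt ℝ f x) (hg : DifferentiableAt ℝ g x) :
    pdC j (fun y => f y + g y) x = pdC j f x + pdC j g x := by
  simp [pdC, fderiv_fun_add hf hg]

lemma pdC_mul (hf : DifferentiableAt ℝ f x) (hg : DifferentiableAt ℝ g x) :
    pdC j (fun y => f y * g y) x = pdC j f x * g x + f x * pdC j g x := by
  simp only [pdC, fderiv_fun_mul hf hg, add_apply, smul_apply, smul_eq_mul]
  ring

lemma pdC_const_mul (c : ℂ) (hf : DifferentiableAt ℝ f x) :
    pdC j (fun y => c * f y) x = c * pdC j f x := by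
  simp [pdC, fderiv_const_mul hf]

lemma pdC_conj :
    pdC j (fun y => conj (f y)) x = conj (pdC j f x) :=
  congrArg (· (Pi.single j 1)) (conjCLE.comp_fderiv (f := f) (x := x))

lemma pdC_ofReal {V : (Fin d → ℝ) → ℝ} (hV : DifferentiableAt ℝ V x) :
    pdC j (fun y => (V y : ℂ)) x = pdR j V x :=
  congrArg (· (Pi.single j 1)) ((ofRealCLM.hasFDerivAt.comp x hV.hasFDerivAt).fderiv)

lemma pdC_pdC_add (hf : ContDiff ℝ 2 f) (hg : ContDiff ℝ 2 g) :
    pdC j (fun y => pdC j (fun z => f z + g z) y) x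
      = pdC j (fun y => pdC j f y) x + pdC j (fun y => pdC j g y) x := by
  have hf' := hf.differentiable two_ne_zero
  have hg' := hg.differentiable two_ne_zero
  simp only [pdC_add (hf' _) (hg' _)]
  exact pdC_add (hf.differentiable_pdC x) (hg.differentiable_pdC x)

lemma pdC_pdC_const_mul (c : ℂ) (hf : ContDiff ℝ 2 f) :
    pdC j (fun y => pdC j (fun z => c * f z) y) x = c * pdC j (fun y => pdC j f y) x := by
  have hf' := hf.differentiable two_ne_zero
  simp only [pdC_const_mul c (hf' _)]
  exact pdC_const_mul c (hf.differentiable_pdC x)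

lemma pdC_pdC_mul (hf : ContDiff ℝ 2 f) (hg : ContDiff ℝ 2 g) :
    pdC j (fun y => pdC j (fun z => f z * g z) y) x
      = pdC j (fun y => pdC j f y) x * g x + 2 * (pdC j f x * pdC j g x)
        + f x * pdC j (fun y => pdC j g y) x := by
  have hf' := hf.differentiable two_ne_zero
  have hg' := hg.differentiable two_ne_zero
  have hf'' := hf.differentiable_pdC (j := j)
  have hg'' := hg.differentiable_pdC (j := j)
  simp only [pdC_mul (hf' _) (hg' _)]
  rw [pdC_add ((hf'' x).fun_mul (hg' x)) ((hf' x).fun_mul (hg'' x)), pdC_mul (hf'' x) (hg' x),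
    pdC_mul (hf' x) (hg'' x)]
  ring

lemma pdC_pdC_ofReal {V : (Fin d → ℝ) → ℝ} (hV : ContDiff ℝ 2 V) :
    pdC j (fun y => pdC j (fun z => (V z : ℂ)) y) x = pdR j (fun y => pdR j V y) x := by
  simp only [pdC_ofReal (hV.differentiable two_ne_zero _)]
  exact pdC_ofReal (hV.differentiable_pdR x)

end PartialDerivatives

section GrossPitaevskii

variable {d : ℕ} {V : (Fin d → ℝ) → ℝ} {ϑ : ℝ} {v : (Fin d → ℝ) → ℂ} {j : Fin d}
  {x : Fin d → ℝ}

/-- The multiplier `V + ϑ|v|²` of `F₂`, with `|v|²` written as `v v̄` to be differentiated. -/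
noncomputable def gpMultiplier (V : (Fin d → ℝ) → ℝ) (ϑ : ℝ) (v : (Fin d → ℝ) → ℂ) :
    (Fin d → ℝ) → ℂ :=
  fun y => (V y : ℂ) + ϑ * (v y * conj (v y))

lemma F2gp_eq_mul : F2gp V ϑ v = fun y => -I * (gpMultiplier V ϑ v y * v y) := by
  funext y
  simp only [F2gp, gpMultiplier, mul_conj]
  ring

lemma ContDiff.gpMultiplier (hV : ContDiff ℝ 2 V) (hv : ContDiff ℝ 2 v) :
    ContDiff ℝ 2 (gpMultiplier V ϑ v) :=
  hV.ofReal.add (contDiff_const.mul (hv.mul hv.conj))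

lemma pdC_gpMultiplier (hV : ContDiff ℝ 2 V) (hv : ContDiff ℝ 2 v) :
    pdC j (gpMultiplier V ϑ v) x
      = pdR j V x + ϑ * (pdC j v x * conj (v x) + v x * conj (pdC j v x)) := by
  have hV' := hV.differentiable two_ne_zero x
  have hv' := hv.differentiable two_ne_zero x
  have hvc' := hv.conj.differentiable two_ne_zero x
  unfold gpMultiplier
  rw [pdC_add (hV.ofReal.differentiable two_ne_zero x)
    ((hv'.fun_mul hvc').const_mul _), pdC_const_mul _ (hv'.fun_mul hvc'), pdC_mul hv' hvc',
    pdC_ofReal hV', pdC_conj]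

lemma pdC_pdC_gpMultiplier (hV : ContDiff ℝ 2 V) (hv : ContDiff ℝ 2 v) :
    pdC j (fun y => pdC j (gpMultiplier V ϑ v) y) x
      = pdR j (fun y => pdR j V y) x + ϑ * (pdC j (fun y => pdC j v y) x * conj (v x)
        + 2 * (pdC j v x * conj (pdC j v x)) + v x * conj (pdC j (fun y => pdC j v y) x)) := by
  have hvv := hv.mul hv.conj
  unfold gpMultiplier
  rw [pdC_pdC_add hV.ofReal (contDiff_const.mul hvv),
    pdC_pdC_ofReal hV, pdC_pdC_const_mul _ hvv, pdC_pdC_mul hv hv.conj]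
  simp only [pdC_conj]

lemma pdC_F2gp (hV : ContDiff ℝ 2 V) (hv : ContDiff ℝ 2 v) :
    pdC j (F2gp V ϑ v) x = -I * (pdC j (gpMultiplier V ϑ v) x * v x
      + gpMultiplier V ϑ v x * pdC j v x) := by
  have hP := (hV.gpMultiplier hv (ϑ := ϑ)).differentiable two_ne_zero x
  have hv' := hv.differentiable two_ne_zero x
  rw [F2gp_eq_mul, pdC_const_mul _ (hP.fun_mul hv'), pdC_mul hP hv']

lemma pdC_pdC_F2gp (hV : ContDiff ℝ 2 V) (hv : ContDiff ℝ 2 v) :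
    pdC j (fun y => pdC j (F2gp V ϑ v) y) x
      = -I * (pdC j (fun y => pdC j (gpMultiplier V ϑ v) y) x * v x
        + 2 * (pdC j (gpMultiplier V ϑ v) x * pdC j v x)
        + gpMultiplier V ϑ v x * pdC j (fun y => pdC j v y) x) := by
  have hP := hV.gpMultiplier hv (ϑ := ϑ)
  rw [F2gp_eq_mul, pdC_pdC_const_mul _ (hP.mul hv), pdC_pdC_mul hP hv]

end GrossPitaevskii

theorem iterated_commutator_gross_pitaevskii_general {d : ℕ} (ϑ : ℝ)
    (V : (Fin d → ℝ) → ℝ) (hV : ContDiff ℝ 2 V)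
    (v : (Fin d → ℝ) → ℂ) (hv : ContDiff ℝ 2 v) (x : Fin d → ℝ) :
    F2gpD V ϑ v (G1gp V ϑ v) x - G1gpD V ϑ v (F2gp V ϑ v) x
    = - 2 * Complex.I * ((gdotR V V x : ℝ) - 2 * (ϑ : ℂ)
        * ((Complex.normSq (v x) : ℂ) * (lapR V x : ℂ)
          + (ϑ : ℂ) * ((Complex.normSq (v x) : ℂ)
              * (2 * (((starRingEnd ℂ) (v x) * lapC v x).re : ℂ)
                + 3 * gdotC (fun z => (starRingEnd ℂ) (v z)) v x)
            + ((((starRingEnd ℂ) (v x)) ^ 2 * gdotC v v x).re : ℂ)))) * v x := by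
  simp only [F2gpD, G1gpD, G1gp, gdotC, lapC, lapR, gdotR, pdC_conj,
    pdC_pdC_F2gp hV hv, pdC_pdC_gpMultiplier hV hv]
  simp only [pdC_F2gp hV hv, pdC_gpMultiplier hV hv, pdC_ofReal (hV.differentiable two_ne_zero _)]
  simp only [F2gp_eq_mul, gpMultiplier, ← mul_conj, re_eq_add_conj]
  simp only [ofReal_sum, ofReal_mul, map_sum, map_add, map_sub, map_mul, map_neg, map_pow, map_ofNat,
    conj_conj, conj_ofReal, conj_I]
  simp only [mul_add, add_mul, mul_sub, sub_mul, div_eq_mul_inv, neg_mul, mul_neg, neg_neg,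
    Finset.mul_sum, Finset.sum_mul]
  simp only [← Finset.sum_add_distrib, ← Finset.sum_sub_distrib, ← Finset.sum_neg_distrib]
  exact Finset.sum_congr rfl fun j _ => by ring

/-- **Iterated commutator identity for the Gross–Pitaevskii equation**:
`F₂′(v)G₁(v) − G₁′(v)F₂(v)
  = −2i (|∇V|² − 2ϑ(|v|²ΔV + ϑ(|v|²(2Re(v̄Δv) + 3∇v̄·∇v) + Re(v̄²∇v·∇v)))) v`
pointwise. -/
theorem iterated_commutator_gross_pitaevskii {d : ℕ} (hd : 1 ≤ d) (ϑ : ℝ)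
    (V : (Fin d → ℝ) → ℝ) (hV : ContDiff ℝ 2 V)
    (v : (Fin d → ℝ) → ℂ) (hv : ContDiff ℝ 2 v) (x : Fin d → ℝ) :
    F2gpD V ϑ v (G1gp V ϑ v) x - G1gpD V ϑ v (F2gp V ϑ v) x
    = - 2 * Complex.I * ((gdotR V V x : ℝ) - 2 * (ϑ : ℂ)
        * ((Complex.normSq (v x) : ℂ) * (lapR V x : ℂ)
          + (ϑ : ℂ) * ((Complex.normSq (v x) : ℂ)
              * (2 * (((starRingEnd ℂ) (v x) * lapC v x).re : ℂ)
                + 3 * gdotC (fun z => (starRingEnd ℂ) (v z)) v x)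
            + ((((starRingEnd ℂ) (v x)) ^ 2 * gdotC v v x).re : ℂ)))) * v x :=
  iterated_commutator_gross_pitaevskii_general ϑ V hV v hv x
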